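/- Let R be a commutative ring, I an ideal of R, N ≥ 0, and let A, B be n×n matrices over R with A ≡ I_n and B ≡ I_n modulo I^{N+1} (entrywise). Then the commutator ABA⁻¹B⁻¹ is congruent to the identity modulo I^{2N+2}, assuming A and B are invertible. -/

import Mathlib

/-!
Writing `X = A - 1` and `Y = B - 1`, one has `A B A⁻¹ B⁻¹ - 1 = (X Y - Y X) A⁻¹ B⁻¹`, and the
entries of `X Y` and `Y X` are sums of products of two elements of `I ^ (N + 1)`.
-/

open scoped commutatorElement

namespace Ideal

variable {R : Type*} [CommSemiring R] {n : Type*} [Fintype n] [DecidableEq n]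

theorem mul_mem_matrix_mul {I J : Ideal R} {M N : Matrix n n R}
    (hM : M ∈ I.matrix n) (hN : N ∈ J.matrix n) : M * N ∈ (I * J).matrix n :=
  fun i j => sum_mem _ fun k _ => mul_mem_mul (hM i k) (hN k j)

theorem mul_mem_matrix_of_mem_left {I : Ideal R} {M : Matrix n n R} (N : Matrix n n R)
    (hM : M ∈ I.matrix n) : M * N ∈ I.matrix n :=
  fun i _ => sum_mem _ fun k _ => I.mul_mem_right _ (hM i k)

end Ideal

theorem Units.val_commutatorElement_sub_one {S : Type*} [Ring S] (a b : Sˣ) :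
    ((⁅a, b⁆ : Sˣ) : S) - 1 = (((a : S) - 1) * (b - 1) - (b - 1) * (a - 1)) * ↑a⁻¹ * ↑b⁻¹ := by
  have hXY : ((a : S) - 1) * (b - 1) - (b - 1) * (a - 1) = a * b - b * a := by noncomm_ring
  have hba : (b : S) * a * ↑a⁻¹ * ↑b⁻¹ = 1 := by simp [mul_assoc]
  rw [hXY, sub_mul, sub_mul, hba, commutatorElement_def]
  push_cast
  rfl

theorem Matrix.val_commutatorElement_sub_one_mem_matrix_mul {R : Type*} [CommRing R]
    {n : Type*} [Fintype n] [DecidableEq n] {I J : Ideal R} {A B : (Matrix n n R)ˣ}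
    (hA : (A : Matrix n n R) - 1 ∈ I.matrix n) (hB : (B : Matrix n n R) - 1 ∈ J.matrix n) :
    ((⁅A, B⁆ : (Matrix n n R)ˣ) : Matrix n n R) - 1 ∈ (I * J).matrix n := by
  rw [Units.val_commutatorElement_sub_one, mul_assoc]
  refine Ideal.mul_mem_matrix_of_mem_left _ (sub_mem ?_ ?_)
  · exact Ideal.mul_mem_matrix_mul hA hB
  · rw [mul_comm I]
    exact Ideal.mul_mem_matrix_mul hB hA

/-- If `A, B ∈ GLₙ(R)` are congruent to the identity modulo `I^(N+1)` (entrywise),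
then the commutator `A * B * A⁻¹ * B⁻¹` is congruent to the identity modulo `I^(2N+2)`. -/
theorem commutator_congr_one_mod_sq {R : Type*} [CommRing R] (I : Ideal R) (N : ℕ)
    {n : ℕ} (A B : (Matrix (Fin n) (Fin n) R)ˣ)
    (hA : ∀ i j, ((A : Matrix (Fin n) (Fin n) R) - 1) i j ∈ I ^ (N + 1))
    (hB : ∀ i j, ((B : Matrix (Fin n) (Fin n) R) - 1) i j ∈ I ^ (N + 1)) :
    ∀ i j, (((A * B * A⁻¹ * B⁻¹ : (Matrix (Fin n) (Fin n) R)ˣ) : Matrix (Fin n) (Fin n) R) - 1) i j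
      ∈ I ^ (2 * N + 2) := by
  have hpow : I ^ (2 * N + 2) = I ^ (N + 1) * I ^ (N + 1) := by rw [← pow_add]; ring_nf
  rw [← commutatorElement_def, hpow]
  exact Matrix.val_commutatorElement_sub_one_mem_matrix_mul hA hB
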